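/- arXiv:1108.5113 — 3 statements merged into one kernel-verified Lean document; each statement's English description precedes it below -/
import Mathlib

section
/- Let C be an invertible antisymmetric real n×n matrix and A an invertible real n×n matrix with ᵗA C A = C. Then the linear map Φ on ℝ^{2n} defined by Φ(q,p) = (Aq + C⁻¹(ᵗA⁻¹ − I)p, p) preserves the bilinear form on ℝ^{2n} = ℝⁿ × ℝⁿ given by the block matrix [[C, I],[−I, 0]], i.e., Ω(Φv, Φw) = Ω(v,w) for all v, w. -/
open Matrix

/-- The twisted symplectic form on ℝ^{2n} = ℝⁿ × ℝⁿ given by the block matrix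
`[[C, I], [−I, 0]]`. -/
def twistedForm {n : ℕ} (C : Matrix (Fin n) (Fin n) ℝ)
    (v w : (Fin n → ℝ) × (Fin n → ℝ)) : ℝ :=
  v.1 ⬝ᵥ C.mulVec w.1 + v.1 ⬝ᵥ w.2 - v.2 ⬝ᵥ w.1

/-- The linear map Φ(q,p) = (Aq + C⁻¹(ᵗA⁻¹ − I)p, p). -/
noncomputable def PhiMap {n : ℕ} (C A : Matrix (Fin n) (Fin n) ℝ)
    (v : (Fin n → ℝ) × (Fin n → ℝ)) : (Fin n → ℝ) × (Fin n → ℝ) :=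
  (A.mulVec v.1 + (C⁻¹ * ((A⁻¹)ᵀ - 1)).mulVec v.2, v.2)

lemma aux_dot {n : ℕ} (M : Matrix (Fin n) (Fin n) ℝ) (x z : Fin n → ℝ) :
    M.mulVec x ⬝ᵥ z = x ⬝ᵥ Mᵀ.mulVec z := by
  rw [dotProduct_comm, dotProduct_mulVec, dotProduct_comm, mulVec_transpose]

theorem stmt0 {n : ℕ} (C A : Matrix (Fin n) (Fin n) ℝ)
    (hC : IsUnit C.det) (hCanti : Cᵀ = -C)
    (hA : IsUnit A.det) (hACA : Aᵀ * C * A = C)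
    (v w : (Fin n → ℝ) × (Fin n → ℝ)) :
    twistedForm C (PhiMap C A v) (PhiMap C A w) = twistedForm C v w := by
  set B : Matrix (Fin n) (Fin n) ℝ := C⁻¹ * ((A⁻¹)ᵀ - 1) with hB
  have hCi : C * C⁻¹ = 1 := mul_nonsing_inv _ hC
  have hiC : C⁻¹ * C = 1 := nonsing_inv_mul _ hC
  have hAi : A * A⁻¹ = 1 := mul_nonsing_inv _ hA
  have hiA : A⁻¹ * A = 1 := nonsing_inv_mul _ hA
  have hAtdet : IsUnit Aᵀ.det := by rwa [det_transpose]
  have hAt : (A⁻¹)ᵀ = (Aᵀ)⁻¹ := transpose_nonsing_inv A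
  have hAtAt : Aᵀ * (Aᵀ)⁻¹ = 1 := mul_nonsing_inv _ hAtdet
  have hCit : (C⁻¹)ᵀ = -C⁻¹ := by
    rw [transpose_nonsing_inv, hCanti]
    refine inv_eq_right_inv ?_
    rw [neg_mul_neg, hCi]
  have hBt : Bᵀ = (1 - A⁻¹) * C⁻¹ := by
    rw [hB, transpose_mul, hCit, transpose_sub, transpose_transpose, transpose_one]
    rw [mul_neg, ← neg_mul, neg_sub]
  have hinv : A⁻¹ * (C⁻¹ * (Aᵀ)⁻¹) = C⁻¹ := by
    refine (inv_eq_right_inv ?_).symm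
    nth_rewrite 1 [← hACA]
    rw [mul_assoc, mul_assoc, ← mul_assoc A A⁻¹, hAi, one_mul,
      ← mul_assoc C C⁻¹, hCi, one_mul, hAtAt]
  have hCB : C * B = (A⁻¹)ᵀ - 1 := by
    rw [hB, ← mul_assoc, hCi, one_mul]
  have h2 : Aᵀ * (C * B) = 1 - Aᵀ := by
    rw [hCB, mul_sub, mul_one, hAt, hAtAt]
  have h3 : Bᵀ * C = 1 - A⁻¹ := by
    rw [hBt, mul_assoc, hiC, mul_one]
  have h4 : Bᵀ * (C * B) + Bᵀ - B = 0 := by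
    rw [← mul_assoc, h3, hBt, hB, hAt]
    simp only [sub_mul, mul_sub, one_mul, mul_one, mul_assoc]
    rw [hinv]
    abel
  have h4' : Bᵀ * (C * B) = B - Bᵀ := eq_sub_of_add_eq (sub_eq_zero.mp h4)
  obtain ⟨q1, p1⟩ := v
  obtain ⟨q2, p2⟩ := w
  simp only [twistedForm, PhiMap]
  simp only [mulVec_add, dotProduct_add, add_dotProduct, aux_dot, mulVec_mulVec]
  have e1 : q1 ⬝ᵥ (Aᵀ * (C * A)).mulVec q2 = q1 ⬝ᵥ C.mulVec q2 := by
    rw [← mul_assoc, hACA]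
  have e2 : q1 ⬝ᵥ (Aᵀ * (C * B)).mulVec p2 = q1 ⬝ᵥ p2 - q1 ⬝ᵥ Aᵀ.mulVec p2 := by
    rw [h2, sub_mulVec, one_mulVec, dotProduct_sub]
  have e3 : p1 ⬝ᵥ (Bᵀ * (C * A)).mulVec q2 = p1 ⬝ᵥ A.mulVec q2 - p1 ⬝ᵥ q2 := by
    rw [← mul_assoc, h3, sub_mul, one_mul, hiA, sub_mulVec, one_mulVec, dotProduct_sub]
  have e4 : p1 ⬝ᵥ (Bᵀ * (C * B)).mulVec p2
      = p1 ⬝ᵥ B.mulVec p2 - p1 ⬝ᵥ Bᵀ.mulVec p2 := by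
    rw [h4', sub_mulVec, dotProduct_sub]
  rw [e1, e2, e3, e4]
  ring
end

section
/- Let d₁², …, d_m² be positive reals and V a positive integer. For a multi-index j = (j₁,…,j_m) ∈ ℕ^m set ν(j) = π Σ_i d_i²(2 j_i + 1), with each value counted with multiplicity V times the number of multi-indices attaining it. Then this spectrum determines the multiset {d₁², …, d_m²} and the number V. -/
open Real

/-- ν(j) = π Σ_i d_i² (2 j_i + 1), where `dsq i` denotes d_i². -/
noncomputable def nuVal {m : ℕ} (dsq : Fin m → ℝ) (j : Fin m → ℕ) : ℝ :=
  π * ∑ i, dsq i * (2 * (j i : ℝ) + 1)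

/-!
Since ν(j) = π Σ dᵢ² + Σ wᵢ jᵢ with wᵢ = 2π dᵢ², the spectrum is, up to the factor V and the
shift π Σ dᵢ², the function N_w counting the representations of a real number as an
ℕ-combination of the weights w. This function vanishes on the negative reals and equals 1 at 0,
which pins down V and the shift. The least positive point of its support is the least weight μ,
and sorting representations by whether the coefficient of a least weight vanishes gives
N_w(x) = N_{w∖μ}(x) + N_w(x - μ). Hence the counting function of the remaining weights is
determined as well, and induction on their number recovers the multiset of weights.
-/

open Finset

theorem exists_equiv_of_map_univ_val_eq {α β γ : Type*} [Fintype α] [Fintype β] (f : α → γ)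
    (g : β → γ) (h : univ.val.map f = univ.val.map g) : ∃ e : α ≃ β, ∀ a, g (e a) = f a := by
  classical
  have hfiber (c : γ) : Fintype.card {a // f a = c} = Fintype.card {b // g b = c} := by
    have hcount := congrArg (Multiset.count c) h
    simp only [Multiset.count_map, Fintype.card_subtype, @eq_comm _ c] at hcount ⊢
    exact hcount
  exact ⟨Equiv.ofFiberEquiv fun c => Fintype.equivOfCardEq (hfiber c), Equiv.ofFiberEquiv_map _⟩

lemma Fin.map_univ_val_eq_cons_succAbove {α : Type*} {n : ℕ} (f : Fin (n + 1) → α)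
    (i : Fin (n + 1)) : univ.val.map f = f i ::ₘ univ.val.map (f ∘ i.succAbove) := by
  rw [Fin.univ_succAbove n i, cons_val, Multiset.map_cons, map_val, Multiset.map_map]
  rfl

def reprSet {ι : Type*} [Fintype ι] (w : ι → ℝ) (x : ℝ) : Set (ι → ℕ) :=
  {j | ∑ i, w i * j i = x}

noncomputable def reprCount {ι : Type*} [Fintype ι] (w : ι → ℝ) (x : ℝ) : ℕ :=
  (reprSet w x).ncard

section Fintype

variable {ι : Type*} [Fintype ι] {w w' : ι → ℝ}

lemma sum_mul_add_single [DecidableEq ι] (w : ι → ℝ) (j : ι → ℕ) (k : ι) :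
    ∑ i, w i * ((j + Pi.single k 1 : ι → ℕ) i : ℝ) = ∑ i, w i * j i + w k := by
  simp [mul_add, sum_add_distrib, Pi.single_apply]

lemma single_mem_reprSet [DecidableEq ι] (w : ι → ℝ) (k : ι) :
    Pi.single k 1 ∈ reprSet w (w k) := by
  simpa [reprSet] using sum_mul_add_single w 0 k

lemma weight_mul_le_of_mem_reprSet (hw : ∀ i, 0 ≤ w i) {x : ℝ} {j : ι → ℕ}
    (hj : j ∈ reprSet w x) (k : ι) : w k * j k ≤ x :=
  hj ▸ single_le_sum (f := fun i => w i * (j i : ℝ)) (fun i _ => by have := hw i; positivity)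
    (mem_univ k)

lemma finite_reprSet (hw : ∀ i, 0 < w i) (x : ℝ) : (reprSet w x).Finite := by
  refine (Set.Finite.pi fun i => Set.finite_Iic ⌊x / w i⌋₊).subset fun j hj i _ => ?_
  exact Nat.le_floor ((le_div_iff₀' (hw i)).2 (weight_mul_le_of_mem_reprSet (hw · |>.le) hj i))

lemma reprSet_eq_empty_of_neg (hw : ∀ i, 0 ≤ w i) {x : ℝ} (hx : x < 0) : reprSet w x = ∅ :=
  Set.eq_empty_of_forall_notMem fun j hj => hx.not_ge <| hj ▸
    sum_nonneg fun i _ => by have := hw i; positivity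

lemma reprSet_zero (hw : ∀ i, 0 < w i) : reprSet w 0 = {0} := by
  ext j
  simp only [reprSet, Set.mem_ofPred_eq, Set.mem_singleton_iff]
  refine ⟨fun hj => funext fun k => ?_, fun hj => by simp [hj]⟩
  have hle := weight_mul_le_of_mem_reprSet (hw · |>.le) hj k
  have hjk : (j k : ℝ) ≤ 0 := by nlinarith [hw k]
  simpa using hjk

lemma exists_weight_le_of_mem_reprSet (hw : ∀ i, 0 ≤ w i) {x : ℝ} (hx : 0 < x) {j : ι → ℕ}
    (hj : j ∈ reprSet w x) : ∃ k, w k ≤ x := by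
  obtain ⟨k, hk⟩ : ∃ k, j k ≠ 0 := by
    by_contra! h
    simp [reprSet, h, hx.ne] at hj
  refine ⟨k, le_trans ?_ (weight_mul_le_of_mem_reprSet hw hj k)⟩
  have hjk : (1 : ℝ) ≤ j k := by exact_mod_cast Nat.one_le_iff_ne_zero.2 hk
  nlinarith [hw k]

lemma reprCount_of_neg (hw : ∀ i, 0 ≤ w i) {x : ℝ} (hx : x < 0) : reprCount w x = 0 := by
  rw [reprCount, reprSet_eq_empty_of_neg hw hx, Set.ncard_empty]

lemma reprCount_zero (hw : ∀ i, 0 < w i) : reprCount w 0 = 1 := by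
  rw [reprCount, reprSet_zero hw, Set.ncard_singleton]

lemma reprCount_weight_ne_zero (hw : ∀ i, 0 < w i) (k : ι) : reprCount w (w k) ≠ 0 := by
  classical
  exact ((Set.ncard_pos (finite_reprSet hw _)).2 ⟨_, single_mem_reprSet w k⟩).ne'

lemma exists_weight_le_of_reprCount_eq (hw : ∀ i, 0 < w i) (hw' : ∀ i, 0 ≤ w' i)
    (h : reprCount w = reprCount w') (k : ι) : ∃ k', w' k' ≤ w k := by
  obtain ⟨j, hj⟩ := Set.nonempty_of_ncard_ne_zero (h ▸ reprCount_weight_ne_zero hw k)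
  exact exists_weight_le_of_mem_reprSet hw' (hw k) hj

lemma le_of_mul_reprCount_sub_eq (hw : ∀ i, 0 < w i) (hw' : ∀ i, 0 ≤ w' i) {c c' : ℝ}
    {V V' : ℕ} (hV : 0 < V) (h : ∀ x, V * reprCount w (x - c) = V' * reprCount w' (x - c')) :
    V' ≤ V ∧ c' ≤ c := by
  have hc := h c
  rw [sub_self, reprCount_zero hw, mul_one] at hc
  have hne : reprCount w' (c - c') ≠ 0 := fun h0 => by simp [h0, hV.ne'] at hc
  exact ⟨hc ▸ Nat.le_mul_of_pos_right V' (Nat.pos_of_ne_zero hne),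
    sub_nonneg.1 (not_lt.1 fun hlt => hne (reprCount_of_neg hw' hlt))⟩

end Fintype

section Fin

variable {n : ℕ}

lemma sum_mul_insertNth_zero (w : Fin (n + 1) → ℝ) (i : Fin (n + 1)) (j : Fin n → ℕ) :
    ∑ k, w k * (Fin.insertNth (α := fun _ => ℕ) i 0 j k : ℝ) =
      ∑ k, (w ∘ i.succAbove) k * j k := by
  simp [Fin.sum_univ_succAbove _ i]

lemma reprSet_inter_eq_image_insertNth (w : Fin (n + 1) → ℝ) (i : Fin (n + 1)) (x : ℝ) :
    reprSet w x ∩ {j | j i = 0} = i.insertNth 0 '' reprSet (w ∘ i.succAbove) x := by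
  ext j
  constructor
  · rintro ⟨hj, hi : j i = 0⟩
    refine ⟨i.removeNth j, ?_, by simp [← hi]⟩
    rwa [← Fin.insertNth_self_removeNth i j, hi, reprSet, Set.mem_ofPred_eq,
      sum_mul_insertNth_zero] at hj
  · rintro ⟨j, hj, rfl⟩
    exact ⟨(sum_mul_insertNth_zero w i j).trans hj, by simp⟩

lemma reprSet_sdiff_eq_image_add_single (w : Fin (n + 1) → ℝ) (i : Fin (n + 1)) (x : ℝ) :
    reprSet w x \ {j | j i = 0} = (· + Pi.single i 1) '' reprSet w (x - w i) := by
  ext j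
  constructor
  · rintro ⟨hj, hi : j i ≠ 0⟩
    have hle : Pi.single i 1 ≤ j := fun k => by
      rcases eq_or_ne k i with rfl | hk <;> simp [*, Nat.one_le_iff_ne_zero]
    refine ⟨j - Pi.single i 1, ?_, tsub_add_cancel_of_le hle⟩
    have hsum := sum_mul_add_single w (j - Pi.single i 1) i
    rw [tsub_add_cancel_of_le hle] at hsum
    simp only [reprSet, Set.mem_ofPred_eq] at hj ⊢
    linarith
  · rintro ⟨j, hj, rfl⟩
    exact ⟨(sum_mul_add_single w j i).trans (by rw [hj]; ring), by simp⟩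

lemma reprCount_succAbove {w : Fin (n + 1) → ℝ} (hw : ∀ i, 0 < w i) (i : Fin (n + 1)) (x : ℝ) :
    reprCount w x = reprCount (w ∘ i.succAbove) x + reprCount w (x - w i) := by
  rw [reprCount, ← Set.ncard_inter_add_ncard_sdiff_eq_ncard _ {j | j i = 0} (finite_reprSet hw x),
    reprSet_inter_eq_image_insertNth, reprSet_sdiff_eq_image_add_single,
    Set.ncard_image_of_injective _ (Fin.insertNth_injective2.right 0),
    Set.ncard_image_of_injective _ (add_left_injective _)]
  rfl

theorem map_univ_val_eq_of_reprCount_eq {w w' : Fin n → ℝ} (hw : ∀ i, 0 < w i)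
    (hw' : ∀ i, 0 < w' i) (h : reprCount w = reprCount w') :
    univ.val.map w = univ.val.map w' := by
  induction n with
  | zero => simp
  | succ n ih =>
    obtain ⟨i, hi⟩ := Finite.exists_min w
    obtain ⟨i', hi'⟩ := Finite.exists_min w'
    have hmin : w i = w' i' := by
      obtain ⟨k, hk⟩ := exists_weight_le_of_reprCount_eq hw (hw' · |>.le) h i
      obtain ⟨k', hk'⟩ := exists_weight_le_of_reprCount_eq hw' (hw · |>.le) h.symm i'
      exact le_antisymm ((hi k').trans hk') ((hi' k).trans hk)
    have hpeel : reprCount (w ∘ i.succAbove) = reprCount (w' ∘ i'.succAbove) := funext fun x => by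
      have hsplit := reprCount_succAbove hw i x
      rw [h, hmin, reprCount_succAbove hw' i' x] at hsplit
      omega
    rw [Fin.map_univ_val_eq_cons_succAbove w i, Fin.map_univ_val_eq_cons_succAbove w' i', hmin]
    exact congrArg _ (ih (fun _ => hw _) (fun _ => hw' _) hpeel)

end Fin

lemma nuVal_eq {m : ℕ} (dsq : Fin m → ℝ) (j : Fin m → ℕ) :
    nuVal dsq j = π * ∑ i, dsq i + ∑ i, 2 * π * dsq i * j i := by
  simp only [nuVal, mul_sum, ← sum_add_distrib]
  exact sum_congr rfl fun i _ => by ring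

lemma card_nuVal_eq {m : ℕ} (dsq : Fin m → ℝ) (x : ℝ) :
    Nat.card {j : Fin m → ℕ // nuVal dsq j = x} =
      reprCount (fun i => 2 * π * dsq i) (x - π * ∑ i, dsq i) :=
  Nat.card_congr <| Equiv.subtypeEquivRight fun j => by
    rw [nuVal_eq]; exact eq_sub_iff_add_eq'.symm

theorem stmt16_general {m : ℕ} (dsq dsq' : Fin m → ℝ)
    (hd : ∀ i, 0 < dsq i) (hd' : ∀ i, 0 < dsq' i)
    (V V' : ℕ) (hV : 0 < V) (hV' : 0 < V')
    (hspec : ∀ x : ℝ,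
      V * Nat.card {j : Fin m → ℕ // nuVal dsq j = x} =
        V' * Nat.card {j : Fin m → ℕ // nuVal dsq' j = x}) :
    V = V' ∧ ∃ σ : Equiv.Perm (Fin m), ∀ i, dsq' i = dsq (σ i) := by
  set w := fun i => 2 * π * dsq i
  set w' := fun i => 2 * π * dsq' i
  have hw : ∀ i, 0 < w i := fun i => by have := hd i; positivity
  have hw' : ∀ i, 0 < w' i := fun i => by have := hd' i; positivity
  simp only [card_nuVal_eq] at hspec
  obtain ⟨hV'V, hc'c⟩ := le_of_mul_reprCount_sub_eq hw (hw' · |>.le) hV hspec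
  obtain ⟨hVV', hcc'⟩ := le_of_mul_reprCount_sub_eq hw' (hw · |>.le) hV' fun x => (hspec x).symm
  obtain rfl := le_antisymm hVV' hV'V
  have hcount : reprCount w = reprCount w' := funext fun x => by
    simpa [le_antisymm hcc' hc'c, hV.ne'] using hspec (x + π * ∑ i, dsq i)
  obtain ⟨σ, hσ⟩ :=
    exists_equiv_of_map_univ_val_eq w' w (map_univ_val_eq_of_reprCount_eq hw hw' hcount).symm
  exact ⟨rfl, σ, fun i => by simpa [w, w', pi_ne_zero] using (hσ i).symm⟩

/-- The spectrum {ν(j)}, each value counted with multiplicity V times the number of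
multi-indices attaining it, determines the multiset {d_i²} and the number V. -/
theorem stmt16 {m : ℕ} (hm : 0 < m) (dsq dsq' : Fin m → ℝ)
    (hd : ∀ i, 0 < dsq i) (hd' : ∀ i, 0 < dsq' i)
    (V V' : ℕ) (hV : 0 < V) (hV' : 0 < V')
    (hspec : ∀ x : ℝ,
      V * Nat.card {j : Fin m → ℕ // nuVal dsq j = x} =
        V' * Nat.card {j : Fin m → ℕ // nuVal dsq' j = x}) :
    V = V' ∧ ∃ σ : Equiv.Perm (Fin m), ∀ i, dsq' i = dsq (σ i) :=
  stmt16_general dsq dsq' hd hd' V V' hV hV' hspec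
end

section
/- Let ω_r = Σ_{j=1}^m r_j dx_j ∧ dy_j with positive integers r₁ | r₂ | … | r_m. For 1 ≤ k ≤ m, the minimal nonzero absolute value of ∫_T ω_r^k over 2k-dimensional coordinate subtori T of the torus ℤ^{2m}\ℝ^{2m} (equivalently, of the pairing of [ω_r]^k with integral homology classes) is k! · r₁ r₂ ⋯ r_k. -/
private lemma aux_le_apply {k m : ℕ} (f : Fin k → Fin m) (hf : StrictMono f) :
    ∀ n (h : n < k), n ≤ (f ⟨n, h⟩ : ℕ) := by
  intro n
  induction n with
  | zero => intro h; exact Nat.zero_le _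
  | succ n ih =>
    intro h
    have h' : n < k := Nat.lt_of_succ_lt h
    have hlt : (⟨n, h'⟩ : Fin k) < ⟨n + 1, h⟩ := by simp [Fin.lt_def]
    have h1 := ih h'
    have h2 : (f ⟨n, h'⟩ : ℕ) < (f ⟨n + 1, h⟩ : ℕ) := by exact_mod_cast hf hlt
    omega

/-- For ω_r = Σ r_j dx_j ∧ dy_j with r₁ | r₂ | ⋯ | r_m, the nonzero absolute values of
the integrals of ω_r^k over 2k-dimensional coordinate subtori are exactly the numbers
k! ∏_{i ∈ s} r_i for k-element subsets s of {1,…,m}, and the minimal one is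
k! · r₁ r₂ ⋯ r_k. -/
theorem stmt18 {m : ℕ} (r : Fin m → ℕ) (hr : ∀ i, 0 < r i)
    (hdvd : ∀ i j : Fin m, i ≤ j → r i ∣ r j)
    (k : ℕ) (hk : 1 ≤ k) (hkm : k ≤ m) :
    IsLeast {n : ℕ | ∃ s : Finset (Fin m), s.card = k ∧
        n = k.factorial * ∏ i ∈ s, r i}
      (k.factorial * ∏ i ∈ Finset.univ.filter (fun i : Fin m => (i : ℕ) < k), r i) := by
  have hfilter : (Finset.univ.filter (fun i : Fin m => (i : ℕ) < k)) =
      (Finset.univ : Finset (Fin k)).map (Fin.castLEEmb hkm) := by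
    ext i
    simp only [Finset.mem_filter, Finset.mem_univ, true_and, Finset.mem_map,
      Fin.castLEEmb_apply]
    constructor
    · intro hi; exact ⟨⟨i, hi⟩, rfl⟩
    · rintro ⟨j, -, rfl⟩; exact j.2
  constructor
  · refine ⟨_, ?_, rfl⟩
    rw [hfilter, Finset.card_map, Finset.card_univ, Fintype.card_fin]
  · rintro n ⟨s, hs, rfl⟩
    refine Nat.mul_le_mul_left _ ?_
    rw [hfilter, Finset.prod_map]
    set f : Fin k → Fin m := fun j => (s.orderIsoOfFin hs j : Fin m) with hf
    have hfmono : StrictMono f := fun a b hab => by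
      exact_mod_cast (s.orderIsoOfFin hs).lt_iff_lt.2 hab
    have hprod : ∏ i ∈ s, r i = ∏ j : Fin k, r (f j) := by
      rw [← (s.orderIsoOfFin hs).symm.bijective.prod_comp fun x => r (f x),
        ← Finset.prod_attach s (fun i => r i)]
      exact Finset.prod_congr rfl fun x _ => by
        simp only [hf]
        rw [OrderIso.apply_symm_apply]
    rw [hprod]
    refine Finset.prod_le_prod (fun _ _ => Nat.zero_le _) (fun j _ => ?_)
    refine Nat.le_of_dvd (hr _) (hdvd _ _ ?_)
    have := aux_le_apply f hfmono j.1 j.2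
    simpa [Fin.le_def, Fin.castLEEmb] using this
end
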